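/- arXiv:1912.02304 — 4 statements merged into one kernel-verified Lean document; each statement's English description precedes it below -/
import Mathlib

section
/- Let D be an AV-domain with quotient field K and let L be a subfield of K. Then the ring D ∩ L is an AV-domain. -/
/-- `D` is an almost valuation (AV-) domain: for all nonzero `a b : D` there is a positive
integer `n` with `a ^ n ∣ b ^ n` or `b ^ n ∣ a ^ n`. -/
def IsAVDomain (D : Type*) [CommRing D] : Prop :=
  ∀ a b : D, a ≠ 0 → b ≠ 0 → ∃ n : ℕ, 0 < n ∧ (a ^ n ∣ b ^ n ∨ b ^ n ∣ a ^ n)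

private lemma aux_dvd (D K : Type*) [CommRing D] [IsDomain D] [Field K] [Algebra D K]
    [IsFractionRing D K] (L : Subfield K)
    (a b : ((algebraMap D K).range ⊓ L.toSubring : Subring K)) (ha : a ≠ 0)
    (x y : D) (hx : algebraMap D K x = (a : K)) (hy : algebraMap D K y = (b : K))
    (n : ℕ) (h : x ^ n ∣ y ^ n) : a ^ n ∣ b ^ n := by
  obtain ⟨c, hc⟩ := h
  have ha1 : (a : K) ≠ 0 := fun h => ha (Subtype.ext h)
  have hck : algebraMap D K c = ((a : K) ^ n)⁻¹ * (b : K) ^ n := by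
    field_simp
    rw [← hx, ← hy, ← map_pow, ← map_pow, ← map_mul, hc, mul_comm]
  have hmem : algebraMap D K c ∈ ((algebraMap D K).range ⊓ L.toSubring : Subring K) := by
    refine Subring.mem_inf.2 ⟨⟨c, rfl⟩, ?_⟩
    rw [hck]
    exact L.mul_mem (L.inv_mem (L.pow_mem a.2.2 n)) (L.pow_mem b.2.2 n)
  refine ⟨⟨algebraMap D K c, hmem⟩, Subtype.ext ?_⟩
  push_cast
  rw [hck]
  field_simp

/-- if `D` is an AV-domain with quotient field `K` and `L` is a subfield of `K`,
then `D ∩ L` is an AV-domain. -/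
theorem stmt_7 (D K : Type*) [CommRing D] [IsDomain D] [Field K] [Algebra D K]
    [IsFractionRing D K] (hD : IsAVDomain D) (L : Subfield K) :
    IsAVDomain ((algebraMap D K).range ⊓ L.toSubring : Subring K) := by
  intro a b ha hb
  obtain ⟨x, hx⟩ := (Subring.mem_inf.1 a.2).1
  obtain ⟨y, hy⟩ := (Subring.mem_inf.1 b.2).1
  have hinj := IsFractionRing.injective D K
  have hx0 : x ≠ 0 := by
    rintro rfl
    exact ha (Subtype.ext (by simpa using hx.symm))
  have hy0 : y ≠ 0 := by
    rintro rfl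
    exact hb (Subtype.ext (by simpa using hy.symm))
  obtain ⟨n, hn, h | h⟩ := hD x y hx0 hy0
  · exact ⟨n, hn, Or.inl (aux_dvd D K L a b ha x y hx hy n h)⟩
  · exact ⟨n, hn, Or.inr (aux_dvd D K L b a hb y x hy hx n h)⟩
end

section
/- Let D be an API-domain and S a multiplicatively closed subset of D not containing 0. Then the localization D_S is an API-domain. If moreover D is quasilocal, then D_S is quasilocal. -/
/-! In a quasilocal ring an ideal generated by two elements is principal only if one of them
divides the other, so any two elements `a`, `b` of a quasilocal API-domain satisfy
`a ^ n ∣ b ^ n` or `b ^ n ∣ a ^ n` for some `n > 0`. A ring with this property is quasilocal: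
if `x + y` is a unit and `x ∣ y ^ n`, then `x ∣ (x + y) ^ n`. Both this property and the API
property see elements only up to associates, and every element of `D_S` is associated to the
image of an element of `D`. -/

/-- `D` is an almost principal ideal (API-) domain: for every nonempty set `S` of nonzero
elements of `D` there is a positive integer `n` such that the ideal generated by the `n`-th
powers of the elements of `S` is principal. -/
def IsAPIDomain (D : Type*) [CommRing D] : Prop :=
  ∀ S : Set D, S.Nonempty → (∀ a ∈ S, a ≠ 0) →
    ∃ n : ℕ, 0 < n ∧ (Ideal.span ((fun a => a ^ n) '' S)).IsPrincipal

/-- For domains these are the almost valuation domains. -/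
def IsAlmostValuationRing (R : Type*) [CommRing R] : Prop :=
  ∀ a b : R, ∃ n : ℕ, 0 < n ∧ (a ^ n ∣ b ^ n ∨ b ^ n ∣ a ^ n)

section

variable {R B : Type*} [CommRing R] [CommRing B]

theorem Ideal.span_image_eq_of_associated {ι : Type*} {s : Set ι} {u v : ι → R}
    (h : ∀ i ∈ s, Associated (u i) (v i)) : Ideal.span (u '' s) = Ideal.span (v '' s) := by
  apply le_antisymm <;> refine Ideal.span_le.mpr ?_ <;> rintro _ ⟨i, hi, rfl⟩
  · exact (Ideal.mem_iff_of_associated (h i hi).symm).mp (Ideal.subset_span ⟨i, hi, rfl⟩)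
  · exact (Ideal.mem_iff_of_associated (h i hi)).mp (Ideal.subset_span ⟨i, hi, rfl⟩)

theorem IsLocalRing.dvd_or_dvd_of_span_pair_isPrincipal [IsLocalRing R] {a b : R}
    (h : (Ideal.span {a, b}).IsPrincipal) : a ∣ b ∨ b ∣ a := by
  obtain ⟨g, hg⟩ := h
  rw [Ideal.submodule_span_eq] at hg
  have hmem : ∀ {x}, x ∈ Ideal.span {a, b} → g ∣ x := fun hx =>
    Ideal.mem_span_singleton.mp (hg ▸ hx)
  obtain ⟨a', rfl⟩ := hmem (Ideal.subset_span (Set.mem_insert a {b}))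
  obtain ⟨b', rfl⟩ := hmem (Ideal.subset_span (Set.mem_insert_of_mem _ rfl))
  obtain ⟨x, y, hxy⟩ := Ideal.mem_span_pair.mp (hg ▸ Ideal.mem_span_singleton_self g :
    g ∈ Ideal.span {g * a', g * b'})
  have hg_fix : g * (1 - (x * a' + y * b')) = 0 := by linear_combination -hxy
  rcases IsLocalRing.isUnit_or_isUnit_one_sub_self (x * a' + y * b') with hu | hu
  · rcases IsLocalRing.isUnit_or_isUnit_of_isUnit_add hu with hu | hu
    · exact .inl (mul_dvd_mul_left g (isUnit_of_mul_isUnit_right hu).dvd)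
    · exact .inr (mul_dvd_mul_left g (isUnit_of_mul_isUnit_right hu).dvd)
  · simp [hu.mul_left_eq_zero.mp hg_fix]

theorem IsAPIDomain.isAlmostValuationRing [IsLocalRing R] (hR : IsAPIDomain R) :
    IsAlmostValuationRing R := by
  intro a b
  rcases eq_or_ne a 0 with rfl | ha
  · exact ⟨1, one_pos, .inr (by simp)⟩
  rcases eq_or_ne b 0 with rfl | hb
  · exact ⟨1, one_pos, .inl (by simp)⟩
  obtain ⟨n, hn, hprinc⟩ := hR {a, b} (by simp) (by simp [ha, hb])
  rw [Set.image_pair] at hprinc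
  exact ⟨n, hn, IsLocalRing.dvd_or_dvd_of_span_pair_isPrincipal hprinc⟩

theorem IsUnit.of_add_of_pow_dvd_pow {x y : R} (hxy : IsUnit (x + y)) {n : ℕ} (hn : 0 < n)
    (hdvd : x ^ n ∣ y ^ n) : IsUnit x := by
  have h := sub_dvd_pow_sub_pow (x + y) y n
  rw [add_sub_cancel_right] at h
  have hx : x ∣ (x + y) ^ n := by
    simpa using dvd_add h ((dvd_pow_self x hn.ne').trans hdvd)
  exact isUnit_of_dvd_unit hx (hxy.pow n)

theorem IsLocalRing.of_isAlmostValuationRing [Nontrivial R] (hR : IsAlmostValuationRing R) :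
    IsLocalRing R := by
  refine IsLocalRing.of_isUnit_or_isUnit_of_isUnit_add fun x y hxy => ?_
  obtain ⟨n, hn, h | h⟩ := hR x y
  · exact .inl (hxy.of_add_of_pow_dvd_pow hn h)
  · exact .inr ((add_comm x y ▸ hxy).of_add_of_pow_dvd_pow hn h)

section Transfer

variable {f : R →+* B} (hf : ∀ b, ∃ a, Associated (f a) b)
include hf

theorem IsAlmostValuationRing.of_forall_associated_map (hR : IsAlmostValuationRing R) :
    IsAlmostValuationRing B := by
  intro x y
  obtain ⟨a, hax⟩ := hf x
  obtain ⟨b, hby⟩ := hf y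
  obtain ⟨n, hn, hab⟩ := hR a b
  refine ⟨n, hn, hab.imp (fun h => ?_) (fun h => ?_)⟩
  · exact (hax.pow_pow.dvd_iff_dvd_left.mp (hby.pow_pow.dvd_iff_dvd_right.mp (by
      simpa only [map_pow] using map_dvd f h)))
  · exact (hby.pow_pow.dvd_iff_dvd_left.mp (hax.pow_pow.dvd_iff_dvd_right.mp (by
      simpa only [map_pow] using map_dvd f h)))

theorem IsAPIDomain.of_forall_associated_map (hR : IsAPIDomain R) : IsAPIDomain B := by
  choose g hg using hf
  intro T hT hT0
  have hg0 : ∀ a ∈ g '' T, a ≠ 0 := by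
    rintro _ ⟨t, ht, rfl⟩ h0
    exact hT0 t ht ((hg t).eq_zero_iff.mp (by rw [h0, map_zero]))
  obtain ⟨n, hn, d, hd⟩ := hR (g '' T) (hT.image g) hg0
  refine ⟨n, hn, f d, ?_⟩
  calc Ideal.span ((· ^ n) '' T)
      = Ideal.span ((fun t => f (g t) ^ n) '' T) :=
        Ideal.span_image_eq_of_associated fun t _ => (hg t).pow_pow.symm
    _ = Ideal.map f (Ideal.span ((· ^ n) '' (g '' T))) := by
        simp only [Ideal.map_span, Set.image_image, map_pow]
    _ = Ideal.span {f d} := by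
        rw [hd, Ideal.submodule_span_eq, Ideal.map_span, Set.image_singleton]

end Transfer

theorem IsLocalization.exists_associated_algebraMap [Algebra R B] (S : Submonoid R)
    [IsLocalization S B] (z : B) : ∃ a : R, Associated (algebraMap R B a) z := by
  obtain ⟨⟨a, s⟩, h⟩ := IsLocalization.surj S z
  exact ⟨a, h ▸ (associated_mul_unit_right z _ (IsLocalization.map_units B s)).symm⟩

end

theorem stmt_11_general (D : Type*) [CommRing D] (hD : IsAPIDomain D)
    (S : Submonoid D) (hS : (0 : D) ∉ S) :
    IsAPIDomain (Localization S) ∧ (IsLocalRing D → IsLocalRing (Localization S)) := by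
  have hassoc := IsLocalization.exists_associated_algebraMap (B := Localization S) S
  refine ⟨hD.of_forall_associated_map hassoc, fun _ => ?_⟩
  have : Nontrivial (Localization S) := OreLocalization.nontrivial_iff.mpr hS
  exact .of_isAlmostValuationRing (hD.isAlmostValuationRing.of_forall_associated_map hassoc)

/-- if `D` is an API-domain and `S` is a multiplicatively closed subset not
containing `0`, then `D_S` is an API-domain; and if `D` is quasilocal, so is `D_S`. -/
theorem stmt_11 (D : Type*) [CommRing D] [IsDomain D] (hD : IsAPIDomain D)
    (S : Submonoid D) (hS : (0 : D) ∉ S) :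
    IsAPIDomain (Localization S) ∧ (IsLocalRing D → IsLocalRing (Localization S)) :=
  stmt_11_general D hD S hS
end

section
/- An integral domain D (not a field) is a RAV-domain if and only if D is an AV-domain and its integral closure D̄ in its quotient field K is a rational valuation domain, i.e., there exists a valuation on K with values in the linearly ordered abelian group (ℚ, +) (written multiplicatively with a zero adjoined) whose valuation ring is exactly D̄. -/
/-!
If `a` is an almost uniformizing parameter, every `x ≠ 0` in `K` satisfies `x ^ N = u * a ^ P`
with `u` a unit of `D`, and `P / N ∈ ℚ` depends only on `x` because no nonzero power of the
nonunit `a` is a unit. This is an additive valuation: it is `≥ 0` exactly on the integral closure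
(if `P < 0`, then `a ^ (-P)` would be a unit with integral inverse `x ^ N * u⁻¹`), and the
ultrametric inequality follows since the integral closure is a ring. The AV property is read off
the exponents directly.

Conversely, in an AV-domain every integral element has a power in `D`, so an element `ξ` with
`ξ` and `ξ⁻¹` integral has a power that is a unit of `D`. Fix a nonzero nonunit `a`. Since
`0 < v y, v a < 1` are rational, `v y ^ m = v a ^ n` for some `m, n > 0`, and
`ξ = y ^ m / a ^ n` then gives `y ^ (m * k) = u * a ^ (n * k)`.
-/

open WithZero

theorem isUnit_of_isIntegral_of_mul_eq_one {R S : Type*} [CommRing R] [CommRing S] [Algebra R S]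
    [FaithfulSMul R S] {x : S} (hx : IsIntegral R x) {r : R} (h : x * algebraMap R S r = 1) :
    IsUnit r := by
  have hinj : Function.Injective (algebraMap R (integralClosure R S)) := fun r s hrs ↦
    FaithfulSMul.algebraMap_injective R S (congrArg Subtype.val hrs)
  have := (algebraMap_isIntegral_iff.mpr inferInstance).isLocalHom hinj
  refine isUnit_of_map_unit (algebraMap R (integralClosure R S)) r (.of_mul_eq_one ⟨x, hx⟩ ?_)
  exact Subtype.ext (by simpa [mul_comm] using h)

section AlmostUniformizingParameter

variable {D : Type*} [CommRing D]

def IsAlmostUniformizingParameter (a : D) : Prop :=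
  ∀ y : D, y ≠ 0 → ¬IsUnit y → ∃ m n : ℕ, 0 < m ∧ 0 < n ∧ ∃ u : Dˣ, y ^ m = u * a ^ n

namespace IsAlmostUniformizingParameter

variable {a : D}

theorem exists_pow_eq_unit_mul_pow (ha : IsAlmostUniformizingParameter a) {y : D} (hy : y ≠ 0) :
    ∃ m n : ℕ, 0 < m ∧ ∃ u : Dˣ, y ^ m = u * a ^ n := by
  by_cases hyu : IsUnit y
  · obtain ⟨u, rfl⟩ := hyu
    exact ⟨1, 0, one_pos, u, by simp⟩
  · obtain ⟨m, n, hm, -, hu⟩ := ha y hy hyu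
    exact ⟨m, n, hm, hu⟩

theorem isAVDomain (ha : IsAlmostUniformizingParameter a) : IsAVDomain D := by
  intro b c hb hc
  obtain ⟨m, n, hm, u, hu⟩ := ha.exists_pow_eq_unit_mul_pow hb
  obtain ⟨m', n', hm', u', hu'⟩ := ha.exists_pow_eq_unit_mul_pow hc
  have hb' : b ^ (m * m') = ↑(u ^ m') * a ^ (n * m') := by
    rw [pow_mul, hu, mul_pow, ← pow_mul, Units.val_pow_eq_pow_val]
  have hc' : c ^ (m * m') = ↑(u' ^ m) * a ^ (n' * m) := by
    rw [mul_comm m, pow_mul, hu', mul_pow, ← pow_mul, Units.val_pow_eq_pow_val]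
  refine ⟨m * m', Nat.mul_pos hm hm', ?_⟩
  rw [hb', hc', Units.mul_left_dvd, Units.dvd_mul_left, Units.mul_left_dvd, Units.dvd_mul_left]
  exact (le_total _ _).imp (pow_dvd_pow a) (pow_dvd_pow a)

variable [Nontrivial D]

theorem ne_zero [IsReduced D] (ha : IsAlmostUniformizingParameter a) (hD : ¬IsField D) :
    a ≠ 0 := by
  rintro rfl
  obtain ⟨y, hy0, hyu⟩ := Ring.exists_not_isUnit_of_not_isField hD
  obtain ⟨m, n, hm, hn, u, hu⟩ := ha y hy0 hyu
  rw [zero_pow hn.ne', mul_zero] at hu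
  exact hy0 (pow_eq_zero_iff hm.ne' |>.mp hu)

theorem not_isUnit (ha : IsAlmostUniformizingParameter a) (hD : ¬IsField D) : ¬IsUnit a := by
  intro hau
  obtain ⟨y, hy0, hyu⟩ := Ring.exists_not_isUnit_of_not_isField hD
  obtain ⟨m, n, hm, -, u, hu⟩ := ha y hy0 hyu
  exact hyu ((isUnit_pow_iff hm.ne').mp (hu ▸ u.isUnit.mul (hau.pow n)))

end IsAlmostUniformizingParameter

end AlmostUniformizingParameter

section RatValue

variable {D K : Type*} [CommRing D] [Field K] [Algebra D K] {a : D} {x y : K} {q r : ℚ}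

def IsRatValue (a : D) (x : K) (q : ℚ) : Prop :=
  ∃ (N : ℕ) (P : ℤ) (u : Dˣ), 0 < N ∧ q = P / N ∧
    x ^ N = algebraMap D K u * algebraMap D K a ^ P

theorem IsRatValue.inv (hx : IsRatValue a x q) : IsRatValue a x⁻¹ (-q) := by
  obtain ⟨N, P, u, hN, rfl, hxN⟩ := hx
  refine ⟨N, -P, u⁻¹, hN, by push_cast; ring, ?_⟩
  rw [inv_pow, hxN, mul_inv, zpow_neg, map_units_inv]

variable [IsFractionRing D K]

theorem IsRatValue.mul (ha0 : a ≠ 0) (hx : IsRatValue a x q) (hy : IsRatValue a y r) :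
    IsRatValue a (x * y) (q + r) := by
  obtain ⟨N, P, u, hN, rfl, hxN⟩ := hx
  obtain ⟨M, Q, w, hM, rfl, hyM⟩ := hy
  have hα : algebraMap D K a ≠ 0 := (map_ne_zero_iff _ (IsFractionRing.injective D K)).mpr ha0
  refine ⟨N * M, P * M + Q * N, u ^ M * w ^ N, Nat.mul_pos hN hM, ?_, ?_⟩
  · field_simp
    push_cast
    ring
  · rw [mul_pow, pow_mul, pow_mul', hxN, hyM, zpow_add₀ hα, zpow_mul, zpow_mul]
    push_cast
    simp only [zpow_natCast]
    ring

theorem IsRatValue.ne_zero (ha0 : a ≠ 0) (hx : IsRatValue a x q) : x ≠ 0 := by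
  obtain ⟨N, P, u, hN, -, hxN⟩ := hx
  have hα : algebraMap D K a ≠ 0 := (map_ne_zero_iff _ (IsFractionRing.injective D K)).mpr ha0
  rintro rfl
  rw [zero_pow hN.ne'] at hxN
  exact mul_ne_zero (u.isUnit.map (algebraMap D K)).ne_zero (zpow_ne_zero P hα) hxN.symm

theorem eq_zero_of_algebraMap_zpow_eq_unit (hau : ¬IsUnit a) {P : ℤ} {u : Dˣ}
    (h : algebraMap D K a ^ P = algebraMap D K u) : P = 0 := by
  suffices ∀ n : ℕ, ∀ u : Dˣ, algebraMap D K a ^ n = algebraMap D K u → n = 0 by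
    obtain ⟨n, rfl | rfl⟩ := Int.eq_nat_or_neg P
    · exact_mod_cast this n u (by exact_mod_cast h)
    · rw [this n u⁻¹ (by rw [map_units_inv, ← h, zpow_neg, zpow_natCast, inv_inv])]; rfl
  intro n u h
  by_contra hn
  rw [← map_pow, (IsFractionRing.injective D K).eq_iff] at h
  exact hau ((isUnit_pow_iff hn).mp (h ▸ u.isUnit))

theorem eq_zero_of_isRatValue_one (hau : ¬IsUnit a) (h : IsRatValue a (1 : K) q) : q = 0 := by
  obtain ⟨N, P, u, -, rfl, h1⟩ := h
  rw [one_pow, eq_comm, ← eq_inv_mul_iff_mul_eq₀ (u.isUnit.map (algebraMap D K)).ne_zero,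
    mul_one, ← map_units_inv] at h1
  simp [eq_zero_of_algebraMap_zpow_eq_unit hau h1]

theorem IsRatValue.unique (ha0 : a ≠ 0) (hau : ¬IsUnit a) (hq : IsRatValue a x q)
    (hr : IsRatValue a x r) : q = r := by
  have h1 := hq.mul ha0 hr.inv
  rw [mul_inv_cancel₀ (hq.ne_zero ha0)] at h1
  exact add_neg_eq_zero.mp (eq_zero_of_isRatValue_one hau h1)

variable [IsDomain D]

theorem exists_isRatValue (ha : IsAlmostUniformizingParameter a) (hD : ¬IsField D) (hx : x ≠ 0) :
    ∃ q, IsRatValue a x q := by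
  have h_algebraMap {b : D} (hb : b ≠ 0) : ∃ q, IsRatValue a (algebraMap D K b) q := by
    obtain ⟨m, n, hm, u, hu⟩ := ha.exists_pow_eq_unit_mul_pow hb
    refine ⟨n / m, m, n, u, hm, by push_cast; rfl, ?_⟩
    rw [← map_pow, hu, map_mul, map_pow, zpow_natCast]
  obtain ⟨b, c, hc, rfl⟩ := IsFractionRing.div_surjective (A := D) x
  obtain ⟨q, hq⟩ := h_algebraMap (b := b) (by rintro rfl; simp at hx)
  obtain ⟨r, hr⟩ := h_algebraMap (nonZeroDivisors.ne_zero hc)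
  rw [div_eq_mul_inv]
  exact ⟨q + -r, hq.mul (ha.ne_zero hD) hr.inv⟩

variable (a) in
/-- The value of `x` normalised by `v(a) = 1`; a junk value for `x = 0`. -/
noncomputable def ratValue (x : K) : ℚ := Classical.epsilon (IsRatValue a x)

theorem isRatValue_ratValue (ha : IsAlmostUniformizingParameter a) (hD : ¬IsField D)
    (hx : x ≠ 0) : IsRatValue a x (ratValue a x) :=
  Classical.epsilon_spec (exists_isRatValue ha hD hx)

theorem IsRatValue.ratValue_eq (ha : IsAlmostUniformizingParameter a) (hD : ¬IsField D)
    (h : IsRatValue a x q) : ratValue a x = q :=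
  (isRatValue_ratValue ha hD (h.ne_zero (ha.ne_zero hD))).unique (ha.ne_zero hD)
    (ha.not_isUnit hD) h

theorem ratValue_one (ha : IsAlmostUniformizingParameter a) (hD : ¬IsField D) :
    ratValue a (1 : K) = 0 :=
  IsRatValue.ratValue_eq ha hD ⟨1, 0, 1, one_pos, by simp, by simp⟩

theorem ratValue_mul (ha : IsAlmostUniformizingParameter a) (hD : ¬IsField D) (hx : x ≠ 0)
    (hy : y ≠ 0) : ratValue a (x * y) = ratValue a x + ratValue a y :=
  ((isRatValue_ratValue ha hD hx).mul (ha.ne_zero hD)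
    (isRatValue_ratValue ha hD hy)).ratValue_eq ha hD

theorem ratValue_inv (ha : IsAlmostUniformizingParameter a) (hD : ¬IsField D) (hx : x ≠ 0) :
    ratValue a x⁻¹ = -ratValue a x :=
  (isRatValue_ratValue ha hD hx).inv.ratValue_eq ha hD

theorem isIntegral_iff_ratValue_nonneg (ha : IsAlmostUniformizingParameter a) (hD : ¬IsField D)
    (hx : x ≠ 0) : IsIntegral D x ↔ 0 ≤ ratValue a x := by
  obtain ⟨N, P, u, hN, hq, hxN⟩ := isRatValue_ratValue ha hD hx
  rw [hq, le_div_iff₀ (by exact_mod_cast hN), zero_mul, Int.cast_nonneg_iff]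
  rcases le_or_gt 0 P with hP | hP
  · lift P to ℕ using hP
    refine iff_of_true (IsIntegral.of_pow hN ?_) (Int.natCast_nonneg P)
    rw [hxN, zpow_natCast, ← map_pow, ← map_mul]
    exact isIntegral_algebraMap
  obtain ⟨n, rfl⟩ := Int.exists_eq_neg_ofNat hP.le
  refine iff_of_false (fun hint ↦ ha.not_isUnit hD ?_) hP.not_ge
  have hxN' : x ^ N * algebraMap D K (↑u⁻¹ * a ^ n) = 1 := by
    have hα := (map_ne_zero_iff _ (IsFractionRing.injective D K)).mpr (ha.ne_zero hD)
    rw [hxN, map_mul, map_units_inv, map_pow, zpow_neg, zpow_natCast]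
    field_simp
  have := isUnit_of_isIntegral_of_mul_eq_one (hint.pow N) hxN'
  exact (isUnit_pow_iff (by omega)).mp ((Units.isUnit_units_mul _ _).mp this)

theorem min_ratValue_le_ratValue_add (ha : IsAlmostUniformizingParameter a) (hD : ¬IsField D)
    (hx : x ≠ 0) (hy : y ≠ 0) (hxy : x + y ≠ 0) :
    min (ratValue a x) (ratValue a y) ≤ ratValue a (x + y) := by
  wlog hle : ratValue a x ≤ ratValue a y generalizing x y
  · rw [min_comm, add_comm]
    exact this hy hx (by rwa [add_comm]) (le_of_not_ge hle)
  rw [min_eq_left hle]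
  have hxi := inv_ne_zero hx
  have hyx : IsIntegral D (y * x⁻¹) := by
    rw [isIntegral_iff_ratValue_nonneg ha hD (mul_ne_zero hy hxi), ratValue_mul ha hD hy hxi,
      ratValue_inv ha hD hx]
    linarith
  have hsum : IsIntegral D ((x + y) * x⁻¹) := by
    rw [add_mul, mul_inv_cancel₀ hx]
    exact isIntegral_one.add hyx
  rw [isIntegral_iff_ratValue_nonneg ha hD (mul_ne_zero hxy hxi), ratValue_mul ha hD hxy hxi,
    ratValue_inv ha hD hx] at hsum
  linarith

open Classical in
noncomputable def ratValuation (ha : IsAlmostUniformizingParameter a) (hD : ¬IsField D) :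
    Valuation K (WithZero (Multiplicative ℚ)) where
  toFun x := if x = 0 then 0 else exp (-ratValue a x)
  map_zero' := if_pos rfl
  map_one' := by simp [ratValue_one ha hD]
  map_mul' x y := by
    rcases eq_or_ne x 0 with rfl | hx
    · simp
    rcases eq_or_ne y 0 with rfl | hy
    · simp
    simp [hx, hy, ratValue_mul ha hD hx hy, add_comm]
  map_add_le_max' x y := by
    rcases eq_or_ne x 0 with rfl | hx
    · simp
    rcases eq_or_ne y 0 with rfl | hy
    · simp
    rcases eq_or_ne (x + y) 0 with hxy | hxy
    · simp [hxy]
    simp only [hx, hy, hxy, if_false, le_max_iff, exp_le_exp, neg_le_neg_iff, ← min_le_iff]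
    exact min_ratValue_le_ratValue_add ha hD hx hy hxy

theorem ratValuation_le_one_iff (ha : IsAlmostUniformizingParameter a) (hD : ¬IsField D) :
    ratValuation ha hD x ≤ 1 ↔ x ∈ integralClosure D K := by
  rcases eq_or_ne x 0 with rfl | hx
  · simp [zero_mem]
  simp only [ratValuation, Valuation.coe_mk, MonoidWithZeroHom.coe_mk, ZeroHom.coe_mk, hx,
    if_false, ← exp_zero, exp_le_exp, neg_nonpos, mem_integralClosure_iff,
    isIntegral_iff_ratValue_nonneg ha hD hx]

end RatValue

theorem Rat.exists_nsmul_eq_nsmul_of_neg {p q : ℚ} (hp : p < 0) (hq : q < 0) :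
    ∃ m n : ℕ, 0 < m ∧ 0 < n ∧ m • p = n • q := by
  set r := q / p
  have hr : 0 < r := div_pos_of_neg_of_neg hq hp
  refine ⟨r.num.natAbs, r.den, by simpa using hr.ne', r.den_pos, ?_⟩
  have hnum : (r.num.natAbs : ℚ) = r * r.den := by
    rw [Nat.cast_natAbs, Int.cast_abs, Rat.mul_den_eq_num,
      abs_of_pos (by exact_mod_cast Rat.num_pos.mpr hr)]
  have hrp : r * p = q := div_mul_cancel₀ q hp.ne
  simp only [nsmul_eq_mul, hnum]
  linear_combination (r.den : ℚ) * hrp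

theorem WithZero.exists_pow_eq_pow_of_lt_one {γ δ : WithZero (Multiplicative ℚ)} (hγ0 : γ ≠ 0)
    (hγ : γ < 1) (hδ0 : δ ≠ 0) (hδ : δ < 1) : ∃ m n : ℕ, 0 < m ∧ 0 < n ∧ γ ^ m = δ ^ n := by
  lift γ to ℚ using hγ0
  lift δ to ℚ using hδ0
  rw [← exp_zero, exp_lt_exp] at hγ hδ
  obtain ⟨m, n, hm, hn, h⟩ := Rat.exists_nsmul_eq_nsmul_of_neg hγ hδ
  exact ⟨m, n, hm, hn, by rw [← exp_nsmul, ← exp_nsmul, h]⟩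

section AVDomain

variable {D K : Type*} [CommRing D] [IsDomain D] [Field K] [Algebra D K] [IsFractionRing D K]
  {x : K}

theorem IsAVDomain.exists_pow_eq_algebraMap (hAV : IsAVDomain D) (hx : IsIntegral D x) :
    ∃ k : ℕ, 0 < k ∧ ∃ d : D, x ^ k = algebraMap D K d := by
  rcases eq_or_ne x 0 with rfl | hx0
  · exact ⟨1, one_pos, 0, by simp⟩
  obtain ⟨b, c, hc, rfl⟩ := IsFractionRing.div_surjective (A := D) x
  have hb : b ≠ 0 := by rintro rfl; simp at hx0
  have hc' : algebraMap D K c ≠ 0 := IsFractionRing.to_map_ne_zero_of_mem_nonZeroDivisors hc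
  obtain ⟨n, hn, ⟨d, hd⟩ | ⟨d, hd⟩⟩ := hAV b c hb (nonZeroDivisors.ne_zero hc)
  · have hxd : (algebraMap D K b / algebraMap D K c) ^ n * algebraMap D K d = 1 := by
      rw [div_pow, div_mul_eq_mul_div, ← map_pow, ← map_mul, ← hd, map_pow,
        div_self (pow_ne_zero n hc')]
    obtain ⟨e, rfl⟩ := isUnit_of_isIntegral_of_mul_eq_one (hx.pow n) hxd
    refine ⟨n, hn, ↑e⁻¹, ?_⟩
    rw [map_units_inv]
    exact eq_inv_of_mul_eq_one_left hxd
  · refine ⟨n, hn, d, ?_⟩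
    rw [div_pow, div_eq_iff (pow_ne_zero n hc'), ← map_pow, ← map_pow, hd, map_mul, mul_comm]

theorem IsAVDomain.exists_pow_eq_unit (hAV : IsAVDomain D) (hx0 : x ≠ 0) (hx : IsIntegral D x)
    (hxi : IsIntegral D x⁻¹) : ∃ k : ℕ, 0 < k ∧ ∃ u : Dˣ, x ^ k = algebraMap D K u := by
  obtain ⟨k, hk, d, hd⟩ := hAV.exists_pow_eq_algebraMap hx
  have hd' : x⁻¹ ^ k * algebraMap D K d = 1 := by
    rw [← hd, inv_pow, inv_mul_cancel₀ (pow_ne_zero k hx0)]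
  obtain ⟨u, rfl⟩ := isUnit_of_isIntegral_of_mul_eq_one (hxi.pow k) hd'
  exact ⟨k, hk, u, hd⟩

theorem Valuation.map_algebraMap_lt_one_of_not_isUnit {Γ₀ : Type*}
    [LinearOrderedCommGroupWithZero Γ₀] (v : Valuation K Γ₀)
    (hv : ∀ x : K, v x ≤ 1 ↔ x ∈ integralClosure D K) {y : D} (hy : ¬IsUnit y) :
    v (algebraMap D K y) < 1 := by
  rcases eq_or_ne y 0 with rfl | hy0
  · simp
  have hy0' : algebraMap D K y ≠ 0 := (map_ne_zero_iff _ (IsFractionRing.injective D K)).mpr hy0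
  refine ((hv _).mpr isIntegral_algebraMap).lt_of_ne fun h ↦ hy ?_
  refine isUnit_of_isIntegral_of_mul_eq_one ((hv _).mp ?_) (inv_mul_cancel₀ hy0')
  rw [map_inv₀, h, inv_one]

theorem IsAVDomain.exists_isAlmostUniformizingParameter (hAV : IsAVDomain D) (hD : ¬IsField D)
    (v : Valuation K (WithZero (Multiplicative ℚ)))
    (hv : ∀ x : K, v x ≤ 1 ↔ x ∈ integralClosure D K) :
    ∃ a : D, IsAlmostUniformizingParameter a := by
  have hinj := IsFractionRing.injective D K
  obtain ⟨a, ha0, hau⟩ := Ring.exists_not_isUnit_of_not_isField hD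
  refine ⟨a, fun y hy0 hyu ↦ ?_⟩
  have hα : algebraMap D K a ≠ 0 := (map_ne_zero_iff _ hinj).mpr ha0
  have hη : algebraMap D K y ≠ 0 := (map_ne_zero_iff _ hinj).mpr hy0
  obtain ⟨m, n, hm, hn, hmn⟩ := WithZero.exists_pow_eq_pow_of_lt_one
    (v.ne_zero_iff.mpr hη) (v.map_algebraMap_lt_one_of_not_isUnit hv hyu)
    (v.ne_zero_iff.mpr hα) (v.map_algebraMap_lt_one_of_not_isUnit hv hau)
  set ξ := algebraMap D K y ^ m / algebraMap D K a ^ n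
  have hξ0 : ξ ≠ 0 := div_ne_zero (pow_ne_zero m hη) (pow_ne_zero n hα)
  have hvξ : v ξ = 1 := by
    rw [map_div₀, map_pow, map_pow, hmn, div_self (pow_ne_zero n (v.ne_zero_iff.mpr hα))]
  obtain ⟨k, hk, u, hu⟩ := hAV.exists_pow_eq_unit hξ0 ((hv ξ).mp hvξ.le)
    ((hv ξ⁻¹).mp (by rw [map_inv₀, hvξ, inv_one]))
  refine ⟨m * k, n * k, Nat.mul_pos hm hk, Nat.mul_pos hn hk, u, hinj ?_⟩
  rw [pow_mul, pow_mul, map_pow, map_mul, map_pow, map_pow, map_pow, ← hu, div_pow,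
    div_mul_cancel₀ _ (pow_ne_zero k (pow_ne_zero n hα))]

end AVDomain

/-- a domain `D` which is not a field is a RAV-domain (i.e. has an almost
uniformizing parameter) iff `D` is an AV-domain and its integral closure `D̄` in its quotient
field `K` is a rational valuation domain, i.e. there is a valuation on `K` with values in
`ℚ` (written multiplicatively, with a zero adjoined) whose valuation ring is exactly `D̄`. -/
theorem stmt_17 (D K : Type*) [CommRing D] [IsDomain D] [Field K] [Algebra D K]
    [IsFractionRing D K] (hDf : ¬IsField D) :
    (∃ a : D, ∀ y : D, y ≠ 0 → ¬IsUnit y →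
        ∃ m n : ℕ, 0 < m ∧ 0 < n ∧ ∃ u : Dˣ, y ^ m = (u : D) * a ^ n) ↔
      (IsAVDomain D ∧
        ∃ v : Valuation K (WithZero (Multiplicative ℚ)),
          ∀ x : K, v x ≤ 1 ↔ x ∈ integralClosure D K) := by
  constructor
  · rintro ⟨a, ha : IsAlmostUniformizingParameter a⟩
    exact ⟨ha.isAVDomain, ratValuation ha hDf, fun _ ↦ ratValuation_le_one_iff ha hDf⟩
  · rintro ⟨hAV, v, hv⟩
    exact hAV.exists_isAlmostUniformizingParameter hDf v hv
end

section
/- Let D be an AV-domain whose integral closure in its quotient field is a DVR. Then D is quasilocal with maximal ideal M and the intersection of all powers M^n for n ≥ 1 is the zero ideal. -/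
open IsLocalRing

theorem isUnit_of_dvd_pow_of_isUnit_add {R : Type*} [CommRing R] {a b : R} {n : ℕ}
    (hab : IsUnit (a + b)) (h : a ∣ b ^ n) : IsUnit a := by
  have : a ∣ (a + b) ^ n := by
    have := dvd_add (add_sub_cancel_right a b ▸ sub_dvd_pow_sub_pow (a + b) b n) h
    rwa [sub_add_cancel] at this
  exact isUnit_of_dvd_unit this (hab.pow n)

theorem IsAVDomain.isLocalRing {D : Type*} [CommRing D] [Nontrivial D] (hD : IsAVDomain D) :
    IsLocalRing D := by
  refine IsLocalRing.of_nonunits_add fun a b ha hb hab => ?_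
  rcases eq_or_ne a 0 with rfl | ha0
  · exact hb (by simpa using hab)
  rcases eq_or_ne b 0 with rfl | hb0
  · exact ha (by simpa using hab)
  obtain ⟨n, hn, hdvd | hdvd⟩ := hD a b ha0 hb0
  · exact ha (isUnit_of_dvd_pow_of_isUnit_add hab ((dvd_pow_self a hn.ne').trans hdvd))
  · exact hb (isUnit_of_dvd_pow_of_isUnit_add (add_comm a b ▸ hab)
      ((dvd_pow_self b hn.ne').trans hdvd))

theorem Ideal.iInf_pow_succ_eq_bot_of_le_comap {R S : Type*} [CommRing R] [CommRing S]
    {f : R →+* S} (hf : Function.Injective f) {I : Ideal R} {J : Ideal S}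
    (hIJ : I ≤ J.comap f) (hJ : ⨅ n : ℕ, J ^ n = ⊥) : ⨅ n : ℕ, I ^ (n + 1) = ⊥ :=
  eq_bot_iff.mpr <| calc
    ⨅ n : ℕ, I ^ (n + 1) ≤ ⨅ n : ℕ, (J ^ n).comap f := le_iInf fun n =>
      calc ⨅ n : ℕ, I ^ (n + 1) ≤ I ^ n :=
            (iInf_le _ n).trans (Ideal.pow_le_pow_right n.le_succ)
        _ ≤ J.comap f ^ n := Ideal.pow_right_mono hIJ n
        _ ≤ (J ^ n).comap f := Ideal.le_comap_pow f n
    _ = ⊥ := by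
      rw [← Ideal.comap_iInf, hJ, ← RingHom.ker_eq_comap_bot,
        (RingHom.injective_iff_ker_eq_bot f).mp hf]

/-- if `D` is an AV-domain whose integral closure in its quotient field is a
DVR, then `D` is quasilocal with maximal ideal `M` and `⋂_{n ≥ 1} M ^ n = 0`. -/
theorem stmt_19 (D K : Type*) [CommRing D] [IsDomain D] [Field K] [Algebra D K]
    [IsFractionRing D K] (hD : IsAVDomain D)
    (hDVR : IsDiscreteValuationRing (integralClosure D K)) :
    ∃ M : Ideal D, M.IsMaximal ∧ (∀ M' : Ideal D, M'.IsMaximal → M' = M) ∧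
      (⨅ n : ℕ, M ^ (n + 1)) = ⊥ := by
  have := hD.isLocalRing
  refine ⟨maximalIdeal D, maximalIdeal.isMaximal D, fun _ hM' => eq_maximalIdeal hM', ?_⟩
  have hKrull : ⨅ n : ℕ, maximalIdeal (integralClosure D K) ^ n = ⊥ :=
    Ideal.iInf_pow_eq_bot_of_isLocalRing _ (maximalIdeal.isMaximal _).ne_top
  exact Ideal.iInf_pow_succ_eq_bot_of_le_comap
    (FaithfulSMul.algebraMap_injective D (integralClosure D K)) (maximalIdeal_comap _).ge hKrull
end
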